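/- Let F be a semi-real hyperfield. Then the Marshall quotient F/ₘ(1+ΣF²) is a real reduced multiring, and the canonical surjective morphism F/ₘ(1+ΣF²) → F/ₘ(ΣḞ²) is an isomorphism of multirings, where Ḟ = F∖{0} and ΣḞ² is the set of elements lying in some finite sum of squares of nonzero elements. -/

import Mathlib

universe u v

/-- A multiring: a commutative monoid with a multivalued addition. -/
class Multiring (A : Type u) extends CommMonoid A, Zero A, Neg A where
  /-- the multivalued sum: `madd b c` is the set `b + c` -/
  madd : A → A → Set A
  madd_nonempty : ∀ a b : A, (madd a b).Nonempty
  madd_rev_left : ∀ a b c : A, a ∈ madd b c → c ∈ madd (-b) a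
  madd_rev_right : ∀ a b c : A, a ∈ madd b c → b ∈ madd a (-c)
  mem_madd_zero : ∀ a b : A, a ∈ madd b 0 ↔ a = b
  madd_assoc : ∀ a b c g x : A, g ∈ madd a b → x ∈ madd g c →
    ∃ h ∈ madd b c, x ∈ madd a h
  madd_comm : ∀ a b : A, madd a b = madd b a
  mul_zero' : ∀ a : A, a * 0 = 0
  madd_mul : ∀ a b c d : A, a ∈ madd b c → a * d ∈ madd (b * d) (c * d)

namespace Multiring

variable {A : Type u} [Multiring A]

/-- the iterated multivalued sum `x₁ + ⋯ + xₙ = {x₁} + (x₂ + ⋯ + xₙ)` of a list -/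
def listSum : List A → Set A
  | [] => {(0 : A)}
  | a :: l => {x : A | ∃ y ∈ listSum l, x ∈ madd a y}

/-- an ideal of a multiring: a nonempty subset with `I + I ⊆ I` and `A·I ⊆ I` -/
def IsIdeal (I : Set A) : Prop :=
  I.Nonempty ∧ (∀ a ∈ I, ∀ b ∈ I, madd a b ⊆ I) ∧ ∀ a : A, ∀ b ∈ I, a * b ∈ I

/-- a prime ideal: a proper ideal such that `a*b ∈ p → a ∈ p ∨ b ∈ p` -/
def IsPrimeIdeal (I : Set A) : Prop :=
  IsIdeal I ∧ (1 : A) ∉ I ∧ ∀ a b : A, a * b ∈ I → a ∈ I ∨ b ∈ I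

/-- a maximal ideal: a proper ideal maximal among proper ideals -/
def IsMaximalIdeal (I : Set A) : Prop :=
  IsIdeal I ∧ (1 : A) ∉ I ∧ ∀ J : Set A, IsIdeal J → (1 : A) ∉ J → I ⊆ J → J = I

/-- a multiplicative subset -/
def IsMultiplicative (S : Set A) : Prop :=
  (1 : A) ∈ S ∧ ∀ s ∈ S, ∀ t ∈ S, s * t ∈ S

/-- a hyperring: a multiring with the strong distributivity property -/
def IsHyperring (A : Type u) [Multiring A] : Prop :=
  ∀ x b c d : A, x ∈ madd (b * d) (c * d) → ∃ a ∈ madd b c, x = a * d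

/-- a von Neumann (regular) hyperring -/
def IsVonNeumann (A : Type u) [Multiring A] : Prop :=
  IsHyperring A ∧ ∀ a : A, ∃ b : A, a = a * a * b

/-- the equivalence modulo an ideal `I`: `a ∼_I b` iff `(a + (-b)) ∩ I ≠ ∅`;
this is equality of classes in the quotient multiring `A/I`. -/
def simI (I : Set A) (a b : A) : Prop := ∃ x ∈ madd a (-b), x ∈ I

/-- membership of classes in the multivalued sum of the quotient `A/I`:
`[a] ∈ [b] + [c]` iff `a ∈ b + c + i` for some `i ∈ I`. -/
def qmemI (I : Set A) (a b c : A) : Prop := ∃ i ∈ I, ∃ w ∈ madd c i, a ∈ madd b w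

/-- representatives `x` with `[x] ∈ [c₁] + ⋯ + [cₙ]` in the quotient `A/I` -/
def qlistSumI (I : Set A) : List A → Set A
  | [] => {x : A | simI I x 0}
  | c :: l => {x : A | ∃ y ∈ qlistSumI I l, qmemI I x c y}

/-- the quotient multiring `A/I` is a multifield: `1 ≠ 0` and every nonzero
element is weak-invertible -/
def QuotIsMultifield (I : Set A) : Prop :=
  ¬ simI I 1 0 ∧
    ∀ a : A, ¬ simI I a 0 →
      ∃ l : List A, l ≠ [] ∧ (1 : A) ∈ qlistSumI I (l.map fun b => a * b)

/-- the quotient multiring `A/I` is a hyperfield: `1 ≠ 0` and every nonzero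
element is invertible -/
def QuotIsHyperfield (I : Set A) : Prop :=
  ¬ simI I 1 0 ∧ ∀ a : A, ¬ simI I a 0 → ∃ b : A, simI I (a * b) 1

/-- the Marshall equivalence associated to a multiplicative set `S`:
`a ∼_S b` iff `as = bt` for some `s,t ∈ S`; this is equality of classes in the
Marshall quotient `A/ₘS`. -/
def simM (S : Set A) (a b : A) : Prop := ∃ s ∈ S, ∃ t ∈ S, a * s = b * t

/-- `S̄ = {x : xs ∈ S for some s ∈ S}` -/
def mbar (S : Set A) : Set A := {x : A | ∃ s ∈ S, x * s ∈ S}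

/-- membership of classes in the multivalued sum of the Marshall quotient `A/ₘS`:
`[a] ∈ [b] + [c]` iff `as ∈ bt + cu` for some `s,t,u ∈ S`. -/
def qmemM (S : Set A) (a b c : A) : Prop :=
  ∃ s ∈ S, ∃ t ∈ S, ∃ u ∈ S, a * s ∈ madd (b * t) (c * u)

/-- representatives `x` with `[x] ∈ [c₁] + ⋯ + [cₙ]` in the Marshall quotient `A/ₘS` -/
def qlistSumM (S : Set A) : List A → Set A
  | [] => {x : A | simM S x 0}
  | c :: l => {x : A | ∃ y ∈ qlistSumM S l, qmemM S x c y}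

/-- the multivalued sum of the hyperfield `3 = {-1, 0, 1}` -/
def signAdd : SignType → SignType → Set SignType
  | SignType.zero, x => {x}
  | x, SignType.zero => {x}
  | SignType.pos, SignType.pos => {SignType.pos}
  | SignType.neg, SignType.neg => {SignType.neg}
  | _, _ => Set.univ

/-- a multiring morphism `A → 3`, i.e. an order of `A` -/
def IsSignMorphism (σ : A → SignType) : Prop :=
  (∀ a b c : A, a ∈ madd b c → σ a ∈ signAdd (σ b) (σ c)) ∧
  (∀ a b : A, σ (a * b) = σ a * σ b) ∧
  (∀ a : A, σ (-a) = -(σ a)) ∧ σ 0 = 0 ∧ σ 1 = 1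

/-- a prime cone of a multiring -/
def IsPrimeCone (P : Set A) : Prop :=
  (∀ a : A, a * a ∈ P) ∧ (∀ a ∈ P, ∀ b ∈ P, madd a b ⊆ P) ∧
  (∀ a ∈ P, ∀ b ∈ P, a * b ∈ P) ∧ (∀ a : A, a ∈ P ∨ -a ∈ P) ∧
  IsPrimeIdeal {x : A | x ∈ P ∧ -x ∈ P}

open Classical in
/-- the map `σ_P : A → 3` associated to a prime cone `P` -/
noncomputable def sigmaOf (P : Set A) (a : A) : SignType :=
  if a ∈ P ∧ -a ∈ P then 0 else if a ∈ P then 1 else -1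

/-- `ΣA²`: the set of elements lying in some finite sum of squares -/
def SumsOfSquares (A : Type u) [Multiring A] : Set A :=
  {x : A | ∃ l : List A, l ≠ [] ∧ x ∈ listSum (l.map fun a => a * a)}

/-- a multiring is semi-real when `-1 ∉ ΣA²` -/
def IsSemiReal (A : Type u) [Multiring A] : Prop := (-(1 : A)) ∉ SumsOfSquares A

/-- a real reduced multiring -/
def IsRealReduced (A : Type u) [Multiring A] : Prop :=
  IsSemiReal A ∧ (∀ a : A, a * a * a = a) ∧
  (∀ a b : A, madd a (a * b * b) = {a}) ∧
  (∀ a b : A, ∃ c : A, madd (a * a) (b * b) = {c})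

/-- a hyperfield: a hyperring with `1 ≠ 0` and all nonzero elements invertible -/
def IsHyperfield (A : Type u) [Multiring A] : Prop :=
  IsHyperring A ∧ (1 : A) ≠ 0 ∧ ∀ a : A, a ≠ 0 → ∃ b : A, a * b = 1

/-- a morphism of multirings -/
def IsMorphism {B : Type v} [Multiring B] (f : A → B) : Prop :=
  (∀ a b c : A, a ∈ madd b c → f a ∈ madd (f b) (f c)) ∧
  (∀ a b : A, f (a * b) = f a * f b) ∧
  (∀ a : A, f (-a) = -(f a)) ∧ f 0 = 0 ∧ f 1 = 1

/-- the radical `√α = {x : xⁿ ∈ α for some n ≥ 1}` of an ideal -/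
def radical (α : Set A) : Set A := {x : A | ∃ n : ℕ, 1 ≤ n ∧ x ^ n ∈ α}

/-- the ideal `(x) = ∪ {t₁x + ⋯ + tₙx}` generated by `x` -/
def genIdeal (x : A) : Set A :=
  {y : A | ∃ l : List A, l ≠ [] ∧ y ∈ listSum (l.map fun t => t * x)}

/-- `S_a = {x : aⁿ ∈ (x) for some n ≥ 0}` -/
def Sgen (a : A) : Set A := {x : A | ∃ n : ℕ, a ^ n ∈ genIdeal x}

/-- `a` is weak-invertible when `1 ∈ ab₁ + ⋯ + abₙ` for some `b₁,…,bₙ` -/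
def WeakInvertible (a : A) : Prop :=
  ∃ l : List A, l ≠ [] ∧ (1 : A) ∈ listSum (l.map fun b => a * b)

/-- the prime spectrum of a multiring -/
abbrev Spec (A : Type u) [Multiring A] : Type u := {p : Set A // IsPrimeIdeal p}

/-- the spectral topology on `spec A`, generated by the sets `D(a) = {p : a ∉ p}` -/
instance : TopologicalSpace (Spec A) :=
  TopologicalSpace.generateFrom {U : Set (Spec A) | ∃ a : A, U = {p : Spec A | a ∉ p.1}}

/-- the Marshall quotient `A/ₘS` is a real reduced multiring (expressed on
representatives) -/
def QuotIsRealReduced (S : Set A) : Prop :=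
  (∀ l : List A, l ≠ [] → (-(1 : A)) ∉ qlistSumM S (l.map fun a => a * a)) ∧
  (∀ a : A, simM S (a * a * a) a) ∧
  (∀ a b x : A, qmemM S x a (a * b * b) ↔ simM S x a) ∧
  (∀ a b : A, ∃ c : A, ∀ x : A, qmemM S x (a * a) (b * b) ↔ simM S x c)

/-- the Marshall quotient `A/ₘS` is a geometric von Neumann hyperring
(expressed on representatives): it is a hyperring, von Neumann regular, and
`e + eᶜ = {1}` for every idempotent `e` -/
def QuotGeometricVN (S : Set A) : Prop :=
  (∀ x b c d : A, qmemM S x (b * d) (c * d) → ∃ a : A, qmemM S a b c ∧ simM S x (a * d)) ∧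
  (∀ a : A, ∃ b : A, simM S a (a * a * b)) ∧
  (∀ e x : A, simM S (e * e) e → qmemM S x 1 (-e) → simM S (e * x) 0 →
    ∀ y : A, qmemM S y e x ↔ simM S y 1)

/-- a von Neumann subgroup: a multiplicative set such that for every idempotent
`a` (with complement `aᶜ`) and every `x ∈ D_S(a, aᶜ)` there is `s ∈ S` with `xs ∈ S` -/
def IsVNSubgroup (S : Set A) : Prop :=
  IsMultiplicative S ∧
    ∀ a x ac : A, a * a = a → ac ∈ madd 1 (-a) → a * ac = 0 →
      (∃ u ∈ S, ∃ v ∈ S, ∃ w ∈ S, x * u ∈ madd (a * v) (ac * w)) →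
      ∃ s ∈ S, x * s ∈ S

/-- a preorder of a multiring -/
def IsPreorderSet (T : Set A) : Prop :=
  (∀ a : A, a * a ∈ T) ∧ (∀ a ∈ T, ∀ b ∈ T, a * b ∈ T) ∧ (∀ a ∈ T, ∀ b ∈ T, madd a b ⊆ T)

/-- `1 + T = ∪ {1 + t : t ∈ T}` -/
def oneAdd (T : Set A) : Set A := {x : A | ∃ t ∈ T, x ∈ madd 1 t}

/-- `ΣḞ²`: elements lying in some finite sum of squares of nonzero elements -/
def sumSqNonzero (A : Type u) [Multiring A] : Set A :=
  {x : A | ∃ l : List A, l ≠ [] ∧ (∀ a ∈ l, a ≠ 0) ∧ x ∈ listSum (l.map fun a => a * a)}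

end Multiring

/-! In a semi-real hyperfield `F`, the set `P = ΣF² ∖ {0}` (which is `ΣḞ²`) is closed under
sums, products and inverses, contains every nonzero square and misses `0` and `-1`: a sum
`s + t ∋ 0` of elements of `P` would give `-1 = s t⁻¹ ∈ ΣF²`. Every `s ∈ P` is a quotient of two
elements of `1 + ΣF²`, since for `t ∈ 1 + s⁻¹` one has `s t ∈ s + 1`; hence the Marshall
equivalences and sums modulo `1 + ΣF²` and modulo `P` coincide. In `F/ₘP` the classes of
`P ∪ {0}` are closed under sums, which keeps `-1` out of every sum of squares, and strong
distributivity writes each element of `a t + a b² u` as `a g` with `g ∈ t + b² u ⊆ P`, which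
gives `a + a b² = {a}`. -/

namespace Multiring

variable {A : Type u} [Multiring A]

section Basic

lemma zero_mul' (a : A) : (0 : A) * a = 0 := by rw [mul_comm]; exact mul_zero' a

lemma self_mem_madd_zero (a : A) : a ∈ madd a 0 := (mem_madd_zero a a).2 rfl

lemma zero_mem_madd_neg (a : A) : (0 : A) ∈ madd (-a) a :=
  madd_rev_left a a 0 (self_mem_madd_zero a)

lemma eq_of_mem_zero_madd {a b : A} (h : a ∈ madd 0 b) : a = b := by
  rw [madd_comm] at h
  exact (mem_madd_zero a b).1 h

lemma neg_neg' (a : A) : -(-a) = a :=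
  ((mem_madd_zero a (-(-a))).1 (madd_rev_left 0 (-a) a (zero_mem_madd_neg a))).symm

lemma neg_one_mul' (a : A) : (-1 : A) * a = -a := by
  have h : (0 : A) ∈ madd ((-1) * a) a := by
    simpa only [zero_mul', one_mul] using madd_mul 0 (-1) 1 a (zero_mem_madd_neg 1)
  have h' : a = -((-1) * a) := (mem_madd_zero _ _).1 (madd_rev_left 0 _ a h)
  rw [← neg_neg' ((-1) * a), ← h']

lemma madd_assoc_left {a b c g x : A} (hg : g ∈ madd b c) (hx : x ∈ madd a g) :
    ∃ w ∈ madd a b, x ∈ madd w c := by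
  rw [madd_comm] at hx
  obtain ⟨h, hh, hx⟩ := madd_assoc b c a g x hg hx
  rw [madd_comm] at hx
  obtain ⟨k, hk, hx⟩ := madd_assoc c a b h x hh hx
  rw [madd_comm] at hx
  exact ⟨k, hk, hx⟩

end Basic

section SumsOfSquares

lemma mem_listSum_append {x : A} {L M : List A} :
    x ∈ listSum (L ++ M) ↔ ∃ u ∈ listSum L, ∃ v ∈ listSum M, x ∈ madd u v := by
  induction L generalizing x with
  | nil =>
    refine ⟨fun hx => ⟨0, rfl, x, hx, by rw [madd_comm]; exact self_mem_madd_zero x⟩, ?_⟩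
    rintro ⟨u, rfl, v, hv, hx⟩
    rwa [eq_of_mem_zero_madd hx]
  | cons a L ih =>
    constructor
    · rintro ⟨y, hy, hx⟩
      obtain ⟨u, hu, v, hv, hy⟩ := ih.1 hy
      obtain ⟨w, hw, hx⟩ := madd_assoc_left hy hx
      exact ⟨w, ⟨u, hu, hw⟩, v, hv, hx⟩
    · rintro ⟨u, ⟨y, hy, hu⟩, v, hv, hx⟩
      obtain ⟨h, hh, hx⟩ := madd_assoc a y v u x hu hx
      exact ⟨h, ih.2 ⟨y, hy, v, hv, hh⟩, hx⟩

lemma mul_mem_listSum_map_mul {x : A} (d : A) {L : List A} (h : x ∈ listSum L) :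
    x * d ∈ listSum (L.map (· * d)) := by
  induction L generalizing x with
  | nil =>
    rw [show x = 0 from h, zero_mul']
    rfl
  | cons a L ih =>
    obtain ⟨y, hy, hx⟩ := h
    exact ⟨y * d, ih hy, madd_mul x a y d hx⟩

lemma mul_self_mem_sumsOfSquares (a : A) : a * a ∈ SumsOfSquares A :=
  ⟨[a], List.cons_ne_nil _ _, 0, rfl, self_mem_madd_zero _⟩

lemma zero_mem_sumsOfSquares : (0 : A) ∈ SumsOfSquares A := by
  simpa only [mul_zero'] using mul_self_mem_sumsOfSquares (0 : A)

lemma madd_subset_sumsOfSquares {a b : A} (ha : a ∈ SumsOfSquares A)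
    (hb : b ∈ SumsOfSquares A) : madd a b ⊆ SumsOfSquares A := by
  obtain ⟨l, hl, ha⟩ := ha
  obtain ⟨m, -, hb⟩ := hb
  intro x hx
  refine ⟨l ++ m, by simp [hl], ?_⟩
  rw [List.map_append]
  exact mem_listSum_append.2 ⟨a, ha, b, hb, hx⟩

lemma mul_mul_self_mem_sumsOfSquares {x : A} (d : A) (hx : x ∈ SumsOfSquares A) :
    x * (d * d) ∈ SumsOfSquares A := by
  obtain ⟨l, hl, h⟩ := hx
  refine ⟨l.map (· * d), by simpa using hl, ?_⟩
  have e : ((fun a => a * a) ∘ (· * d)) = ((· * (d * d)) ∘ fun a => a * a) :=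
    funext fun a => mul_mul_mul_comm a d a d
  rw [List.map_map, e, ← List.map_map]
  exact mul_mem_listSum_map_mul (d * d) h

lemma mul_mem_sumsOfSquares {a b : A} (ha : a ∈ SumsOfSquares A) (hb : b ∈ SumsOfSquares A) :
    a * b ∈ SumsOfSquares A := by
  obtain ⟨m, -, hb⟩ := hb
  induction m generalizing b with
  | nil =>
    rw [show b = 0 from hb, mul_zero']
    exact zero_mem_sumsOfSquares
  | cons c m ih =>
    obtain ⟨y, hy, hb⟩ := hb
    have hba := madd_mul b (c * c) y a hb
    rw [mul_comm b, mul_comm (c * c), mul_comm y] at hba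
    exact madd_subset_sumsOfSquares (mul_mul_self_mem_sumsOfSquares c ha) (ih hy) hba

lemma mem_sumsOfSquares_of_mem_listSum {x : A} (l : List A)
    (h : x ∈ listSum (l.map fun a => a * a)) : x ∈ SumsOfSquares A := by
  rcases l with _ | ⟨c, m⟩
  · rw [show x = 0 from h]
    exact zero_mem_sumsOfSquares
  · exact ⟨c :: m, List.cons_ne_nil _ _, h⟩

lemma isPreorderSet_sumsOfSquares : IsPreorderSet (SumsOfSquares A) :=
  ⟨mul_self_mem_sumsOfSquares, fun _ ha _ hb => mul_mem_sumsOfSquares ha hb,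
    fun _ ha _ hb => madd_subset_sumsOfSquares ha hb⟩

lemma mem_sumSqNonzero_of_mem_listSum {x : A} (l : List A) (hx : x ≠ 0)
    (h : x ∈ listSum (l.map fun a => a * a)) : x ∈ sumSqNonzero A := by
  induction l generalizing x with
  | nil => exact absurd h hx
  | cons c m ih =>
    obtain ⟨y, hy, hxy⟩ := h
    by_cases hc : c = 0
    · simp only [hc, mul_zero'] at hxy
      rw [eq_of_mem_zero_madd hxy] at hx ⊢
      exact ih hx hy
    by_cases hy0 : y = 0
    · exact ⟨[c], List.cons_ne_nil _ _, by simpa using hc, 0, rfl, hy0 ▸ hxy⟩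
    · obtain ⟨l, -, hlz, hyl⟩ := ih hy0 hy
      exact ⟨c :: l, List.cons_ne_nil _ _, by simpa [hc] using hlz, y, hyl, hxy⟩

end SumsOfSquares

section Hyperfield

variable (hF : IsHyperfield A)
include hF

lemma eq_zero_of_mul_eq_zero {a b : A} (h : a * b = 0) (hb : b ≠ 0) : a = 0 := by
  obtain ⟨c, hc⟩ := hF.2.2 b hb
  rw [← mul_one a, ← hc, ← mul_assoc, h, zero_mul']

lemma mul_ne_zero' {a b : A} (ha : a ≠ 0) (hb : b ≠ 0) : a * b ≠ 0 :=
  fun h => ha (eq_zero_of_mul_eq_zero hF h hb)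

lemma exists_mul_eq_one_ne_zero {a : A} (ha : a ≠ 0) : ∃ b, a * b = 1 ∧ b ≠ 0 := by
  obtain ⟨b, hb⟩ := hF.2.2 a ha
  refine ⟨b, hb, fun h => hF.2.1 ?_⟩
  rw [← hb, h, mul_zero']

end Hyperfield

structure IsNonzeroPreordering (P : Set A) : Prop where
  mul_mem : ∀ s ∈ P, ∀ t ∈ P, s * t ∈ P
  madd_subset : ∀ s ∈ P, ∀ t ∈ P, madd s t ⊆ P
  mul_self_mem : ∀ a : A, a ≠ 0 → a * a ∈ P
  zero_not_mem : (0 : A) ∉ P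

lemma isNonzeroPreordering_diff_zero (hF : IsHyperfield A) {T : Set A} (hT : IsPreorderSet T)
    (hneg : (-1 : A) ∉ T) : IsNonzeroPreordering (T \ {0}) where
  mul_mem s hs t ht := ⟨hT.2.1 s hs.1 t ht.1, mul_ne_zero' hF hs.2 ht.2⟩
  madd_subset s hs t ht x hx := by
    refine ⟨hT.2.2 s hs.1 t ht.1 hx, ?_⟩
    rintro rfl
    have hst : s = -t := eq_of_mem_zero_madd (madd_rev_right 0 s t hx)
    obtain ⟨t', htt', ht'⟩ := exists_mul_eq_one_ne_zero hF ht.2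
    refine hneg ?_
    have h : (-1 : A) = s * t * (t' * t') := calc
      (-1 : A) = (-1) * t * t' := by rw [mul_assoc, htt', mul_one]
      _ = s * t' := by rw [neg_one_mul', hst]
      _ = s * t * (t' * t') := by rw [mul_mul_mul_comm, htt', mul_one]
    exact h ▸ hT.2.1 _ (hT.2.1 s hs.1 t ht.1) _ (hT.1 t')
  mul_self_mem a ha := ⟨hT.1 a, mul_ne_zero' hF ha ha⟩
  zero_not_mem h := h.2 rfl

lemma sumSqNonzero_eq_diff_zero (hF : IsHyperfield A) (hsr : IsSemiReal A) :
    sumSqNonzero A = SumsOfSquares A \ {0} := by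
  have hP := isNonzeroPreordering_diff_zero hF isPreorderSet_sumsOfSquares hsr
  refine Set.Subset.antisymm ?_ fun x hx => ?_
  · rintro x ⟨_ | ⟨c, m⟩, hl, hlz, y, hy, hxy⟩
    · exact absurd rfl hl
    have hcc := hP.mul_self_mem c (hlz c List.mem_cons_self)
    by_cases hy0 : y = 0
    · rw [hy0, mem_madd_zero] at hxy
      exact hxy ▸ hcc
    · exact hP.madd_subset _ hcc y ⟨mem_sumsOfSquares_of_mem_listSum m hy, hy0⟩ hxy
  · obtain ⟨l, -, hl⟩ := hx.1
    exact mem_sumSqNonzero_of_mem_listSum l hx.2 hl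

section MarshallQuotient

variable {S : Set A}

lemma simM_refl (h1 : (1 : A) ∈ S) (a : A) : simM S a a := ⟨1, h1, 1, h1, rfl⟩

lemma qmemM_comm {x b c : A} : qmemM S x b c ↔ qmemM S x c b := by
  constructor <;>
  · rintro ⟨s, hs, t, ht, u, hu, h⟩
    exact ⟨s, hs, u, hu, t, ht, madd_comm (A := A) _ _ ▸ h⟩

lemma qmemM_zero_right (h1 : (1 : A) ∈ S) {x a : A} : qmemM S x a 0 ↔ simM S x a := by
  constructor
  · rintro ⟨s, hs, t, ht, u, -, h⟩
    rw [zero_mul', mem_madd_zero] at h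
    exact ⟨s, hs, t, ht, h⟩
  · rintro ⟨s, hs, t, ht, h⟩
    refine ⟨s, hs, t, ht, 1, h1, ?_⟩
    rw [zero_mul', h]
    exact self_mem_madd_zero _

end MarshallQuotient

namespace IsNonzeroPreordering

variable {P : Set A} (hF : IsHyperfield A) (hP : IsNonzeroPreordering P)
include hP

lemma ne_zero {s : A} (hs : s ∈ P) : s ≠ 0 := fun h => hP.zero_not_mem (h ▸ hs)

lemma madd_subset_insert_zero {a b : A} (ha : a ∈ insert 0 P) (hb : b ∈ insert 0 P) :
    madd a b ⊆ insert 0 P := by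
  intro x hx
  rcases ha with rfl | ha
  · exact eq_of_mem_zero_madd hx ▸ hb
  rcases hb with rfl | hb
  · exact (mem_madd_zero x a).1 hx ▸ Or.inr ha
  · exact Or.inr (hP.madd_subset a ha b hb hx)

lemma mul_mem_insert_zero {a t : A} (ha : a ∈ insert 0 P) (ht : t ∈ P) : a * t ∈ insert 0 P := by
  rcases ha with rfl | ha
  · exact Or.inl (zero_mul' t)
  · exact Or.inr (hP.mul_mem a ha t ht)

include hF

lemma one_mem : (1 : A) ∈ P := by
  simpa only [one_mul] using hP.mul_self_mem 1 hF.2.1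

lemma neg_one_not_mem : (-1 : A) ∉ P :=
  fun h => hP.zero_not_mem (hP.madd_subset _ h 1 (hP.one_mem hF) (zero_mem_madd_neg 1))

lemma neg_one_not_mem_insert_zero : (-1 : A) ∉ insert 0 P := by
  rintro (h | h)
  · refine hF.2.1 (eq_of_mem_zero_madd ?_).symm
    simpa only [h] using zero_mem_madd_neg (1 : A)
  · exact hP.neg_one_not_mem hF h

lemma exists_mul_eq_one {s : A} (hs : s ∈ P) : ∃ y ∈ P, s * y = 1 := by
  obtain ⟨y, hy, hy0⟩ := exists_mul_eq_one_ne_zero hF (hP.ne_zero hs)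
  refine ⟨y, ?_, hy⟩
  have h : s * (y * y) = y := by rw [← mul_assoc, hy, one_mul]
  exact h ▸ hP.mul_mem s hs _ (hP.mul_self_mem y hy0)

lemma mem_of_mul_mem {x s : A} (hxs : x * s ∈ P) (hs : s ∈ P) : x ∈ P := by
  obtain ⟨y, hy, hsy⟩ := hP.exists_mul_eq_one hF hs
  have h : x * s * y = x := by rw [mul_assoc, hsy, mul_one]
  exact h ▸ hP.mul_mem _ hxs y hy

lemma mem_insert_zero_of_mul_mem {x s : A} (hxs : x * s ∈ insert 0 P) (hs : s ∈ P) :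
    x ∈ insert 0 P := by
  rcases hxs with h | h
  · exact Or.inl (eq_zero_of_mul_eq_zero hF h (hP.ne_zero hs))
  · exact Or.inr (hP.mem_of_mul_mem hF h hs)

lemma simM_of_mem {x c : A} (hx : x ∈ P) (hc : c ∈ P) : simM P x c := by
  obtain ⟨y, hy, hxy⟩ := hP.exists_mul_eq_one hF hx
  refine ⟨y * c, hP.mul_mem y hy c hc, 1, hP.one_mem hF, ?_⟩
  rw [← mul_assoc, hxy, one_mul, mul_one]

lemma qmemM_mem_insert_zero {x b c : A} (hb : b ∈ insert 0 P) (hc : c ∈ insert 0 P)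
    (h : qmemM P x b c) : x ∈ insert 0 P := by
  obtain ⟨s, hs, t, ht, u, hu, h⟩ := h
  exact hP.mem_insert_zero_of_mul_mem hF (hP.madd_subset_insert_zero
    (hP.mul_mem_insert_zero hb ht) (hP.mul_mem_insert_zero hc hu) h) hs

lemma qlistSumM_map_mul_self_subset (l : List A) :
    qlistSumM P (l.map fun a => a * a) ⊆ insert 0 P := by
  induction l with
  | nil =>
    rintro x ⟨s, hs, t, -, h⟩
    rw [zero_mul'] at h
    exact Or.inl (eq_zero_of_mul_eq_zero hF h (hP.ne_zero hs))
  | cons c l ih =>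
    rintro x ⟨y, hy, hx⟩
    have hcc : c * c ∈ insert 0 P := by
      by_cases hc : c = 0
      · exact Or.inl (by rw [hc, mul_zero'])
      · exact Or.inr (hP.mul_self_mem c hc)
    exact hP.qmemM_mem_insert_zero hF hcc (ih hy) hx

lemma simM_mul_self_mul_self (a : A) : simM P (a * a * a) a := by
  by_cases ha : a = 0
  · rw [ha, mul_zero']
    exact simM_refl (hP.one_mem hF) 0
  · exact ⟨1, hP.one_mem hF, a * a, hP.mul_self_mem a ha, by rw [mul_one, mul_comm]⟩

lemma qmemM_mul_mem_iff {x a d : A} (hd : d ∈ P) : qmemM P x a (a * d) ↔ simM P x a := by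
  constructor
  · rintro ⟨s, hs, t, ht, u, hu, h⟩
    rw [mul_comm a t, mul_assoc, mul_comm a] at h
    obtain ⟨g, hg, hxs⟩ := hF.1 _ _ _ _ h
    exact ⟨s, hs, g, hP.madd_subset t ht _ (hP.mul_mem d hd u hu) hg, hxs.trans (mul_comm g a)⟩
  · rintro ⟨s, hs, t, ht, h⟩
    obtain ⟨w, hw⟩ := madd_nonempty (1 : A) 1
    obtain ⟨e, he, hde⟩ := hP.exists_mul_eq_one hF hd
    have hwP : w ∈ P := hP.madd_subset 1 (hP.one_mem hF) 1 (hP.one_mem hF) hw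
    refine ⟨s * w, hP.mul_mem s hs w hwP, t, ht, t * e, hP.mul_mem t ht e he, ?_⟩
    have hat : a * d * (t * e) = a * t := by
      rw [mul_mul_mul_comm, hde, mul_one]
    rw [hat, ← mul_assoc, h, mul_comm (a * t) w]
    simpa only [one_mul] using madd_mul w 1 1 (a * t) hw

lemma qmemM_iff_simM_of_mem_madd {x p q c : A} (hp : p ∈ P) (hq : q ∈ P) (hc : c ∈ madd p q) :
    qmemM P x p q ↔ simM P x c := by
  constructor
  · rintro ⟨s, hs, t, ht, u, hu, h⟩
    have hxs := hP.madd_subset _ (hP.mul_mem p hp t ht) _ (hP.mul_mem q hq u hu) h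
    exact hP.simM_of_mem hF (hP.mem_of_mul_mem hF hxs hs) (hP.madd_subset p hp q hq hc)
  · rintro ⟨s, hs, t, ht, h⟩
    exact ⟨s, hs, t, ht, t, ht, h ▸ madd_mul c p q t hc⟩

theorem quotIsRealReduced : QuotIsRealReduced P := by
  have h1 := hP.one_mem hF
  refine ⟨fun l _ h => hP.neg_one_not_mem_insert_zero hF (hP.qlistSumM_map_mul_self_subset hF l h),
    hP.simM_mul_self_mul_self hF, fun a b x => ?_, fun a b => ?_⟩
  · by_cases hb : b = 0
    · rw [hb, mul_zero']
      exact qmemM_zero_right h1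
    · rw [mul_assoc]
      exact hP.qmemM_mul_mem_iff hF (hP.mul_self_mem b hb)
  · by_cases ha : a = 0
    · refine ⟨b * b, fun x => ?_⟩
      rw [ha, mul_zero', qmemM_comm]
      exact qmemM_zero_right h1
    by_cases hb : b = 0
    · refine ⟨a * a, fun x => ?_⟩
      rw [hb, mul_zero']
      exact qmemM_zero_right h1
    obtain ⟨c, hc⟩ := madd_nonempty (a * a) (b * b)
    exact ⟨c, fun x => hP.qmemM_iff_simM_of_mem_madd hF (hP.mul_self_mem a ha)
      (hP.mul_self_mem b hb) hc⟩

end IsNonzeroPreordering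

section ChangeOfDenominators

variable {S T : Set A}

lemma qlistSumM_congr (hsim : simM S = simM T) (hq : qmemM S = qmemM T) :
    qlistSumM S = qlistSumM T := by
  funext l
  induction l with
  | nil => simp only [qlistSumM, hsim]
  | cons c l ih => simp only [qlistSumM, ih, hq]

lemma quotIsRealReduced_congr (hsim : simM S = simM T) (hq : qmemM S = qmemM T) :
    QuotIsRealReduced S ↔ QuotIsRealReduced T := by
  unfold QuotIsRealReduced
  rw [hsim, hq, qlistSumM_congr hsim hq]

lemma simM_eq_of_forall_exists_mul_mem (hTS : T ⊆ S) (hT : ∀ s ∈ T, ∀ t ∈ T, s * t ∈ T)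
    (hST : ∀ s ∈ S, ∃ p ∈ T, s * p ∈ T) : simM T = simM S := by
  funext a b
  refine propext ⟨fun ⟨s, hs, t, ht, h⟩ => ⟨s, hTS hs, t, hTS ht, h⟩, ?_⟩
  rintro ⟨s, hs, t, ht, h⟩
  obtain ⟨p, hp, hsp⟩ := hST s hs
  obtain ⟨q, hq, htq⟩ := hST t ht
  refine ⟨s * p * q, hT _ hsp q hq, t * q * p, hT _ htq p hp, ?_⟩
  rw [← mul_assoc, ← mul_assoc, h, mul_assoc b, mul_assoc b, mul_right_comm t]

lemma qmemM_eq_of_forall_exists_mul_mem (hTS : T ⊆ S) (hT : ∀ s ∈ T, ∀ t ∈ T, s * t ∈ T)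
    (hST : ∀ s ∈ S, ∃ p ∈ T, s * p ∈ T) : qmemM T = qmemM S := by
  funext a b c
  refine propext ⟨fun ⟨s, hs, t, ht, u, hu, h⟩ => ⟨s, hTS hs, t, hTS ht, u, hTS hu, h⟩, ?_⟩
  rintro ⟨s, hs, t, ht, u, hu, h⟩
  obtain ⟨p, hp, hsp⟩ := hST s hs
  obtain ⟨q, hq, htq⟩ := hST t ht
  obtain ⟨r, hr, hur⟩ := hST u hu
  refine ⟨s * p * (q * r), hT _ hsp _ (hT q hq r hr), t * q * (p * r), hT _ htq _ (hT p hp r hr),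
    u * r * (p * q), hT _ hur _ (hT p hp q hq), ?_⟩
  convert madd_mul _ _ _ (p * q * r) h using 1 <;> ac_rfl

end ChangeOfDenominators

section OneAdd

variable {T : Set A}

lemma oneAdd_subset (hT : IsPreorderSet T) : oneAdd T ⊆ T := fun _ ⟨t, ht, hx⟩ =>
  hT.2.2 1 (one_mul (1 : A) ▸ hT.1 1) t ht hx

lemma zero_not_mem_oneAdd (hneg : (-1 : A) ∉ T) : (0 : A) ∉ oneAdd T := fun ⟨t, ht, h⟩ =>
  hneg ((mem_madd_zero t (-1)).1 (madd_rev_left 0 1 t h) ▸ ht)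

-- `(1 + σ)(1 + τ) ⊆ 1 + (τ + σ (1 + τ))`
lemma mul_mem_oneAdd (hT : IsPreorderSet T) {s t : A} (hs : s ∈ oneAdd T) (ht : t ∈ oneAdd T) :
    s * t ∈ oneAdd T := by
  obtain ⟨σ, hσ, hs1⟩ := hs
  obtain ⟨τ, hτ, ht1⟩ := ht
  have h := madd_mul s 1 σ t hs1
  rw [one_mul] at h
  obtain ⟨g, hg, hst⟩ := madd_assoc 1 τ (σ * t) t (s * t) ht1 h
  exact ⟨g, hT.2.2 τ hτ _ (hT.2.1 σ hσ t (oneAdd_subset hT ⟨τ, hτ, ht1⟩)) hg, hst⟩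

lemma exists_mul_mem_oneAdd (hF : IsHyperfield A) (hT : IsPreorderSet T) {s : A} (hs : s ∈ T)
    (hs0 : s ≠ 0) : ∃ t ∈ oneAdd T, s * t ∈ oneAdd T := by
  obtain ⟨y, hsy, hy0⟩ := exists_mul_eq_one_ne_zero hF hs0
  have hy : y ∈ T := by
    have h : s * (y * y) = y := by rw [← mul_assoc, hsy, one_mul]
    exact h ▸ hT.2.1 s hs _ (hT.1 y)
  obtain ⟨t, ht⟩ := madd_nonempty (1 : A) y
  have hst := madd_mul t 1 y s ht
  rw [one_mul, mul_comm y, hsy, madd_comm] at hst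
  exact ⟨t, ⟨y, hy, ht⟩, s, hs, mul_comm t s ▸ hst⟩

end OneAdd

end Multiring

/-- For a semi-real hyperfield `F`, the Marshall quotient `F/ₘ(1+ΣF²)` is a
real reduced multiring, and the canonical morphism
`F/ₘ(1+ΣF²) → F/ₘ(ΣḞ²)` is an isomorphism (same classes, same sums). -/
theorem semireal_hyperfield_quotients {F : Type u} [Multiring F]
    (hF : Multiring.IsHyperfield F) (hsr : Multiring.IsSemiReal F) :
    Multiring.QuotIsRealReduced (Multiring.oneAdd (Multiring.SumsOfSquares F)) ∧
    (∀ a b : F,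
      Multiring.simM (Multiring.oneAdd (Multiring.SumsOfSquares F)) a b ↔
        Multiring.simM (Multiring.sumSqNonzero F) a b) ∧
    (∀ a b c : F,
      Multiring.qmemM (Multiring.oneAdd (Multiring.SumsOfSquares F)) a b c ↔
        Multiring.qmemM (Multiring.sumSqNonzero F) a b c) := by
  open Multiring in
  have hT : IsPreorderSet (SumsOfSquares F) := isPreorderSet_sumsOfSquares
  have hP := isNonzeroPreordering_diff_zero hF hT hsr
  rw [sumSqNonzero_eq_diff_zero hF hsr]
  have hsub : oneAdd (SumsOfSquares F) ⊆ SumsOfSquares F \ {0} := fun x hx =>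
    ⟨oneAdd_subset hT hx, fun h => zero_not_mem_oneAdd hsr (h ▸ hx)⟩
  have hmul : ∀ s ∈ oneAdd (SumsOfSquares F), ∀ t ∈ oneAdd (SumsOfSquares F),
      s * t ∈ oneAdd (SumsOfSquares F) := fun s hs t ht => mul_mem_oneAdd hT hs ht
  have hcofinal : ∀ s ∈ SumsOfSquares F \ {0}, ∃ t ∈ oneAdd (SumsOfSquares F),
      s * t ∈ oneAdd (SumsOfSquares F) := fun s hs => exists_mul_mem_oneAdd hF hT hs.1 hs.2
  have hsim := simM_eq_of_forall_exists_mul_mem hsub hmul hcofinal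
  have hq := qmemM_eq_of_forall_exists_mul_mem hsub hmul hcofinal
  exact ⟨(quotIsRealReduced_congr hsim hq).2 (hP.quotIsRealReduced hF),
    fun a b => by rw [hsim], fun a b c => by rw [hq]⟩
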